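/- arXiv:1607.02962 — 2 statements merged into one kernel-verified Lean document; each statement's English description precedes it below -/
import Mathlib

section
/- For all n, m ∈ ℕ₀ and all graphs G₁ ∈ 𝒢_n, G₂ ∈ 𝒢_m, the concatenation satisfies π_{n+m+1}(G₁ ⊙ G₂) = π_n(G₁) · π_m(G₂). -/
open MeasureTheory Finset
open scoped ENNReal Classical

noncomputable section

/-- The interior vertices `{1,…,n}` of the vertex set `{0,1,…,n+1}` (as `Fin (n+2)`). -/
def interiorVerts (n : ℕ) : Finset (Fin (n + 2)) :=
  Finset.univ.filter fun v => v ≠ 0 ∧ v ≠ Fin.last (n + 1)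

/-- `ConnIn G a b S` : there is a path from `a` to `b` in `G` using only
vertices in `S ∪ {a, b}`. -/
def ConnIn {k : ℕ} (G : SimpleGraph (Fin k)) (a b : Fin k) (S : Set (Fin k)) : Prop :=
  ∃ w : G.Walk a b, ∀ v ∈ w.support, v = a ∨ v = b ∨ v ∈ S

/-- `π_n(G) = Σ_{I ⊆ [n]} (-1)^{n-|I|} 1{0 ↔ n+1 in G|I}`. -/
def piFun (n : ℕ) (G : SimpleGraph (Fin (n + 2))) : ℤ :=
  ∑ I ∈ (interiorVerts n).powerset,
    (-1 : ℤ) ^ (n - I.card) *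
      (if ConnIn G 0 (Fin.last (n + 1)) ↑I then 1 else 0)

/-- The number of edges of `G`, counted via ordered pairs `i < j`. -/
def edgeCount {k : ℕ} (G : SimpleGraph (Fin k)) : ℕ :=
  (Finset.univ.filter fun p : Fin k × Fin k => p.1 < p.2 ∧ G.Adj p.1 p.2).card

/-- `κ_n(H) = Σ_{G ∈ 𝒢_n, E(G) ⊆ E(H)} (-1)^{|E(H)|-|E(G)|} π_n(G)`. -/
def kappaFun (n : ℕ) (H : SimpleGraph (Fin (n + 2))) : ℤ :=
  ∑ G ∈ Finset.univ.filter
      (fun G : SimpleGraph (Fin (n + 2)) => G.Connected ∧ G ≤ H),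
    (-1 : ℤ) ^ (edgeCount H - edgeCount G) * piFun n G

/-- Embedding of the first factor's vertex set into that of the concatenation. -/
def emb1 (n m : ℕ) : Fin (n + 2) → Fin (n + m + 3) :=
  fun i => ⟨i.1, by have := i.isLt; omega⟩

/-- Embedding of the second factor's vertex set into that of the concatenation:
the vertices `0,…,m+1` of `G₂` are relabelled as `n+1,…,n+m+2`. -/
def emb2 (n m : ℕ) : Fin (m + 2) → Fin (n + m + 3) :=
  fun j => ⟨n + 1 + j.1, by have := j.isLt; omega⟩

/-- The concatenation `G₁ ⊙ G₂`: the end-vertex `n+1` of `G₁` is identified with the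
start-vertex of `G₂` and the edge sets are united. -/
def concatG {n m : ℕ} (G₁ : SimpleGraph (Fin (n + 2))) (G₂ : SimpleGraph (Fin (m + 2))) :
    SimpleGraph (Fin (n + m + 3)) :=
  SimpleGraph.fromRel fun u v =>
    (∃ i j, G₁.Adj i j ∧ u = emb1 n m i ∧ v = emb1 n m j) ∨
    (∃ i j, G₂.Adj i j ∧ u = emb2 n m i ∧ v = emb2 n m j)

/-! Every path from `0` to the end of `G₁ ⊙ G₂` passes through the cut vertex `n+1`, so only
the sets `I` containing it contribute to `π_{n+m+1}(G₁ ⊙ G₂)`. Such an `I` is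
`{n+1} ∪ I₁ ∪ (I₂ shifted by n+1)` for unique `I₁ ⊆ [n]`, `I₂ ⊆ [m]`, and
`n + m + 1 - |I| = (n - |I₁|) + (m - |I₂|)`. Finally `0 ↔ n+m+2` in `(G₁ ⊙ G₂)|I` iff
`0 ↔ n+1` in `G₁|I₁` and `0 ↔ m+1` in `G₂|I₂`: project a path onto either factor by collapsing
the other factor to its end-vertex, and conversely glue two paths at the cut vertex. -/

namespace SimpleGraph.Walk

variable {V W : Type*} {G : SimpleGraph V} {G' : SimpleGraph W}

theorem exists_support_mapsTo (f : V → W)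
    (hf : ∀ u v, G.Adj u v → f u = f v ∨ G'.Adj (f u) (f v)) {A : Set V} {B : Set W}
    (hAB : Set.MapsTo f A B) {a b : V} (w : G.Walk a b) (hw : ∀ v ∈ w.support, v ∈ A) :
    ∃ w' : G'.Walk (f a) (f b), ∀ v ∈ w'.support, v ∈ B := by
  induction w with
  | nil => exact ⟨nil, by simpa using hAB (hw _ (start_mem_support _))⟩
  | @cons x y z hxy p ih =>
    obtain ⟨w', hw'⟩ := ih fun v hv => hw v (List.mem_cons_of_mem _ hv)
    rcases hf x y hxy with hxy' | hxy'
    · exact ⟨w'.copy hxy'.symm rfl, by simpa using hw'⟩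
    · refine ⟨cons hxy' w', fun v hv => ?_⟩
      rcases List.mem_cons.1 (support_cons hxy' w' ▸ hv) with rfl | hv
      · exact hAB (hw x (start_mem_support _))
      · exact hw' v hv

end SimpleGraph.Walk

namespace ConnIn

variable {k l : ℕ} {G : SimpleGraph (Fin k)} {a b c : Fin k} {S : Set (Fin k)}

theorem map {G' : SimpleGraph (Fin l)} {T : Set (Fin l)} (f : Fin k → Fin l)
    (hf : ∀ u v, G.Adj u v → f u = f v ∨ G'.Adj (f u) (f v))
    (hST : ∀ v ∈ S, f v = f a ∨ f v = f b ∨ f v ∈ T) (h : ConnIn G a b S) :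
    ConnIn G' (f a) (f b) T := by
  obtain ⟨w, hw⟩ := h
  refine w.exists_support_mapsTo f hf ?_ hw
  rintro v (rfl | rfl | hv)
  exacts [Or.inl rfl, Or.inr (Or.inl rfl), hST v hv]

theorem trans (hab : ConnIn G a b S) (hbc : ConnIn G b c S) (hb : b ∈ S) : ConnIn G a c S := by
  obtain ⟨w₁, hw₁⟩ := hab
  obtain ⟨w₂, hw₂⟩ := hbc
  refine ⟨w₁.append w₂, fun v hv => ?_⟩
  rcases (SimpleGraph.Walk.mem_support_append_iff w₁ w₂).1 hv with hv | hv
  · rcases hw₁ v hv with rfl | rfl | hv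
    exacts [Or.inl rfl, Or.inr (Or.inr hb), Or.inr (Or.inr hv)]
  · rcases hw₂ v hv with rfl | rfl | hv
    exacts [Or.inr (Or.inr hb), Or.inr (Or.inl rfl), Or.inr (Or.inr hv)]

end ConnIn

theorem mem_interiorVerts {n : ℕ} {i : Fin (n + 2)} :
    i ∈ interiorVerts n ↔ 1 ≤ i.1 ∧ i.1 ≤ n := by
  have := i.isLt
  simp only [interiorVerts, mem_filter, mem_univ, true_and, Ne, Fin.ext_iff, Fin.val_zero,
    Fin.val_last]
  omega

theorem card_interiorVerts (n : ℕ) : #(interiorVerts n) = n := by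
  have h : interiorVerts n = (univ.erase 0).erase (Fin.last (n + 1)) := by
    ext v
    simp [interiorVerts, and_comm]
  rw [h, card_erase_of_mem (by simp [Fin.ext_iff]), card_erase_of_mem (by simp), card_univ,
    Fintype.card_fin]
  omega

section Concat

variable {n m : ℕ} {G₁ : SimpleGraph (Fin (n + 2))} {G₂ : SimpleGraph (Fin (m + 2))}

@[simp] theorem emb1_val (i : Fin (n + 2)) : (emb1 n m i).1 = i.1 := rfl

@[simp] theorem emb2_val (j : Fin (m + 2)) : (emb2 n m j).1 = n + 1 + j.1 := rfl

theorem emb1_injective : Function.Injective (emb1 n m) := fun i j h => by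
  simpa [Fin.ext_iff] using h

theorem emb2_injective : Function.Injective (emb2 n m) := fun i j h => by
  simpa [Fin.ext_iff] using h

def cutVertex (n m : ℕ) : Fin (n + m + 3) := emb1 n m (Fin.last (n + 1))

@[simp] theorem cutVertex_val : (cutVertex n m).1 = n + 1 := rfl

theorem emb2_zero : emb2 n m 0 = cutVertex n m := Fin.ext (by simp)

theorem emb2_last : emb2 n m (Fin.last (m + 1)) = Fin.last (n + m + 2) := Fin.ext (by simp; omega)

def concatProj₁ (n m : ℕ) (v : Fin (n + m + 3)) : Fin (n + 2) := ⟨min v.1 (n + 1), by omega⟩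

def concatProj₂ (n m : ℕ) (v : Fin (n + m + 3)) : Fin (m + 2) :=
  ⟨v.1 - (n + 1), by have := v.isLt; omega⟩

@[simp] theorem concatProj₁_emb1 (i : Fin (n + 2)) : concatProj₁ n m (emb1 n m i) = i :=
  Fin.ext (by simp [concatProj₁]; omega)

@[simp] theorem concatProj₁_emb2 (j : Fin (m + 2)) :
    concatProj₁ n m (emb2 n m j) = Fin.last (n + 1) :=
  Fin.ext (by simp [concatProj₁])

@[simp] theorem concatProj₂_emb1 (i : Fin (n + 2)) : concatProj₂ n m (emb1 n m i) = 0 :=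
  Fin.ext (by simp [concatProj₂]; omega)

@[simp] theorem concatProj₂_emb2 (j : Fin (m + 2)) : concatProj₂ n m (emb2 n m j) = j :=
  Fin.ext (by simp [concatProj₂])

theorem concatG_adj_emb1 {i j : Fin (n + 2)} (h : G₁.Adj i j) :
    (concatG G₁ G₂).Adj (emb1 n m i) (emb1 n m j) :=
  (SimpleGraph.fromRel_adj _ _ _).2
    ⟨emb1_injective.ne h.ne, Or.inl (Or.inl ⟨i, j, h, rfl, rfl⟩)⟩

theorem concatG_adj_emb2 {i j : Fin (m + 2)} (h : G₂.Adj i j) :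
    (concatG G₁ G₂).Adj (emb2 n m i) (emb2 n m j) :=
  (SimpleGraph.fromRel_adj _ _ _).2
    ⟨emb2_injective.ne h.ne, Or.inl (Or.inr ⟨i, j, h, rfl, rfl⟩)⟩

theorem concatProj₁_adj {u v : Fin (n + m + 3)} (h : (concatG G₁ G₂).Adj u v) :
    concatProj₁ n m u = concatProj₁ n m v ∨
      G₁.Adj (concatProj₁ n m u) (concatProj₁ n m v) := by
  obtain ⟨-, (⟨i, j, hij, rfl, rfl⟩ | ⟨i, j, hij, rfl, rfl⟩) |
    (⟨i, j, hij, rfl, rfl⟩ | ⟨i, j, hij, rfl, rfl⟩)⟩ := (SimpleGraph.fromRel_adj _ _ _).1 h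
  all_goals simp [hij, hij.symm]

theorem concatProj₂_adj {u v : Fin (n + m + 3)} (h : (concatG G₁ G₂).Adj u v) :
    concatProj₂ n m u = concatProj₂ n m v ∨
      G₂.Adj (concatProj₂ n m u) (concatProj₂ n m v) := by
  obtain ⟨-, (⟨i, j, hij, rfl, rfl⟩ | ⟨i, j, hij, rfl, rfl⟩) |
    (⟨i, j, hij, rfl, rfl⟩ | ⟨i, j, hij, rfl, rfl⟩)⟩ := (SimpleGraph.fromRel_adj _ _ _).1 h
  all_goals simp [hij, hij.symm]

@[simp] theorem concatProj₁_zero : concatProj₁ n m 0 = 0 := Fin.ext (by simp [concatProj₁])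

@[simp] theorem concatProj₂_zero : concatProj₂ n m 0 = 0 := Fin.ext (by simp [concatProj₂])

@[simp] theorem concatProj₁_last : concatProj₁ n m (Fin.last (n + m + 2)) = Fin.last (n + 1) :=
  Fin.ext (by simp [concatProj₁]; omega)

@[simp] theorem concatProj₂_last : concatProj₂ n m (Fin.last (n + m + 2)) = Fin.last (m + 1) :=
  Fin.ext (by simp [concatProj₂]; omega)

theorem concatG_adj_val {u v : Fin (n + m + 3)} (h : (concatG G₁ G₂).Adj u v) :
    (u.1 ≤ n + 1 ∧ v.1 ≤ n + 1) ∨ (n + 1 ≤ u.1 ∧ n + 1 ≤ v.1) := by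
  obtain ⟨-, (⟨i, j, -, rfl, rfl⟩ | ⟨i, j, -, rfl, rfl⟩) |
    (⟨i, j, -, rfl, rfl⟩ | ⟨i, j, -, rfl, rfl⟩)⟩ := (SimpleGraph.fromRel_adj _ _ _).1 h
  all_goals simp only [emb1_val, emb2_val]; omega

theorem cutVertex_mem_support (w : (concatG G₁ G₂).Walk 0 (Fin.last (n + m + 2))) :
    cutVertex n m ∈ w.support := by
  obtain ⟨d, hd, hfst, hsnd⟩ :=
    w.exists_boundary_dart {v | v.1 ≤ n} (by simp) (by simp; omega)
  have hcut : d.snd = cutVertex n m := by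
    have := concatG_adj_val d.adj
    simp only [Set.mem_ofPred_eq] at hfst hsnd
    ext
    simp only [cutVertex_val]
    omega
  exact hcut ▸ w.dart_snd_mem_support_of_mem_darts hd

theorem not_connIn_concatG {I : Set (Fin (n + m + 3))} (hI : cutVertex n m ∉ I) :
    ¬ ConnIn (concatG G₁ G₂) 0 (Fin.last (n + m + 2)) I := by
  rintro ⟨w, hw⟩
  rcases hw _ (cutVertex_mem_support w) with h | h | h
  · simp [Fin.ext_iff] at h
  · simp [Fin.ext_iff] at h; omega
  · exact hI h

def concatSet (I₁ : Finset (Fin (n + 2))) (I₂ : Finset (Fin (m + 2))) :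
    Finset (Fin (n + m + 3)) :=
  insert (cutVertex n m) (I₁.image (emb1 n m) ∪ I₂.image (emb2 n m))

variable {I₁ : Finset (Fin (n + 2))} {I₂ : Finset (Fin (m + 2))}

theorem mem_concatSet {v : Fin (n + m + 3)} :
    v ∈ concatSet I₁ I₂ ↔
      v = cutVertex n m ∨ (∃ i ∈ I₁, emb1 n m i = v) ∨ ∃ j ∈ I₂, emb2 n m j = v := by
  simp [concatSet]

theorem cutVertex_mem_concatSet : cutVertex n m ∈ concatSet I₁ I₂ := mem_insert_self _ _

theorem emb1_mem_concatSet {i : Fin (n + 2)} (hi : i ∈ I₁) : emb1 n m i ∈ concatSet I₁ I₂ :=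
  mem_concatSet.2 (Or.inr (Or.inl ⟨i, hi, rfl⟩))

theorem emb2_mem_concatSet {j : Fin (m + 2)} (hj : j ∈ I₂) : emb2 n m j ∈ concatSet I₁ I₂ :=
  mem_concatSet.2 (Or.inr (Or.inr ⟨j, hj, rfl⟩))

theorem connIn_concatG_concatSet_iff :
    ConnIn (concatG G₁ G₂) 0 (Fin.last (n + m + 2)) ↑(concatSet I₁ I₂) ↔
      ConnIn G₁ 0 (Fin.last (n + 1)) ↑I₁ ∧ ConnIn G₂ 0 (Fin.last (m + 1)) ↑I₂ := by
  constructor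
  · intro h
    have h₁ := h.map (concatProj₁ n m) (T := ↑I₁) (fun _ _ => concatProj₁_adj) fun v hv => by
      rcases mem_concatSet.1 hv with rfl | ⟨i, hi, rfl⟩ | ⟨j, -, rfl⟩
      exacts [by simp [cutVertex], by simp [hi], by simp]
    have h₂ := h.map (concatProj₂ n m) (T := ↑I₂) (fun _ _ => concatProj₂_adj) fun v hv => by
      rcases mem_concatSet.1 hv with rfl | ⟨i, -, rfl⟩ | ⟨j, hj, rfl⟩
      exacts [by simp [cutVertex], by simp, by simp [hj]]
    exact ⟨by simpa using h₁, by simpa using h₂⟩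
  · rintro ⟨h₁, h₂⟩
    have h₁' := h₁.map (emb1 n m) (G' := concatG G₁ G₂) (T := ↑(concatSet I₁ I₂))
      (fun _ _ huv => Or.inr (concatG_adj_emb1 huv))
      fun _ hi => Or.inr (Or.inr (emb1_mem_concatSet hi))
    have h₂' := h₂.map (emb2 n m) (G' := concatG G₁ G₂) (T := ↑(concatSet I₁ I₂))
      (fun _ _ huv => Or.inr (concatG_adj_emb2 huv))
      fun _ hj => Or.inr (Or.inr (emb2_mem_concatSet hj))
    rw [emb2_zero, emb2_last] at h₂'
    exact h₁'.trans h₂' cutVertex_mem_concatSet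

theorem card_concatSet (hI₁ : I₁ ⊆ interiorVerts n) (hI₂ : I₂ ⊆ interiorVerts m) :
    #(concatSet I₁ I₂) = #I₁ + #I₂ + 1 := by
  have hdisj : Disjoint (I₁.image (emb1 n m)) (I₂.image (emb2 n m)) := by
    simp only [disjoint_left, mem_image, not_exists, not_and]
    rintro _ ⟨i, -, rfl⟩ j hj h
    have := mem_interiorVerts.1 (hI₂ hj)
    rw [Fin.ext_iff, emb1_val, emb2_val] at h
    omega
  have hcut : cutVertex n m ∉ I₁.image (emb1 n m) ∪ I₂.image (emb2 n m) := by
    simp only [mem_union, mem_image, not_or, not_exists, not_and]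
    refine ⟨fun i hi h => ?_, fun j hj h => ?_⟩
    · have := mem_interiorVerts.1 (hI₁ hi)
      rw [Fin.ext_iff, emb1_val, cutVertex_val] at h
      omega
    · have := mem_interiorVerts.1 (hI₂ hj)
      rw [Fin.ext_iff, emb2_val, cutVertex_val] at h
      omega
  rw [concatSet, card_insert_of_notMem hcut, card_union_of_disjoint hdisj,
    card_image_of_injective _ emb1_injective, card_image_of_injective _ emb2_injective]

theorem concatSet_subset_interiorVerts (hI₁ : I₁ ⊆ interiorVerts n) (hI₂ : I₂ ⊆ interiorVerts m) :
    concatSet I₁ I₂ ⊆ interiorVerts (n + m + 1) := by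
  intro v hv
  rw [mem_interiorVerts]
  rcases mem_concatSet.1 hv with rfl | ⟨i, hi, rfl⟩ | ⟨j, hj, rfl⟩
  · simp
  · have := mem_interiorVerts.1 (hI₁ hi)
    simp only [emb1_val]
    omega
  · have := mem_interiorVerts.1 (hI₂ hj)
    simp only [emb2_val]
    omega

theorem filter_emb1_mem_concatSet (hI₁ : I₁ ⊆ interiorVerts n) :
    (interiorVerts n).filter (emb1 n m · ∈ concatSet I₁ I₂) = I₁ := by
  ext i
  rw [mem_filter]
  refine ⟨fun ⟨hi, h⟩ => ?_, fun hi => ⟨hI₁ hi, emb1_mem_concatSet hi⟩⟩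
  have := mem_interiorVerts.1 hi
  rcases mem_concatSet.1 h with h | ⟨i', hi', h⟩ | ⟨j, -, h⟩
  · rw [Fin.ext_iff, emb1_val, cutVertex_val] at h
    omega
  · exact emb1_injective h ▸ hi'
  · rw [Fin.ext_iff, emb1_val, emb2_val] at h
    omega

theorem filter_emb2_mem_concatSet (hI₂ : I₂ ⊆ interiorVerts m) :
    (interiorVerts m).filter (emb2 n m · ∈ concatSet I₁ I₂) = I₂ := by
  ext j
  rw [mem_filter]
  refine ⟨fun ⟨hj, h⟩ => ?_, fun hj => ⟨hI₂ hj, emb2_mem_concatSet hj⟩⟩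
  have := mem_interiorVerts.1 hj
  rcases mem_concatSet.1 h with h | ⟨i, -, h⟩ | ⟨j', hj', h⟩
  · rw [Fin.ext_iff, emb2_val, cutVertex_val] at h
    omega
  · rw [Fin.ext_iff, emb1_val, emb2_val] at h
    omega
  · exact emb2_injective h ▸ hj'

theorem concatSet_filter_emb_mem {I : Finset (Fin (n + m + 3))}
    (hI : I ⊆ interiorVerts (n + m + 1)) (hcut : cutVertex n m ∈ I) :
    concatSet ((interiorVerts n).filter (emb1 n m · ∈ I))
      ((interiorVerts m).filter (emb2 n m · ∈ I)) = I := by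
  ext v
  refine ⟨fun hv => ?_, fun hv => ?_⟩
  · rcases mem_concatSet.1 hv with rfl | ⟨i, hi, rfl⟩ | ⟨j, hj, rfl⟩
    exacts [hcut, (mem_filter.1 hi).2, (mem_filter.1 hj).2]
  have hv' := mem_interiorVerts.1 (hI hv)
  rcases Nat.lt_or_ge v.1 (n + 1) with hlt | hge
  · obtain ⟨i, rfl⟩ : ∃ i, emb1 n m i = v := ⟨⟨v.1, by omega⟩, rfl⟩
    simp only [emb1_val] at hv' hlt
    exact emb1_mem_concatSet (mem_filter.2 ⟨mem_interiorVerts.2 (by omega), hv⟩)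
  · obtain hcut' | hgt := hge.eq_or_lt
    · rw [show v = cutVertex n m from Fin.ext hcut'.symm]
      exact cutVertex_mem_concatSet
    obtain ⟨j, rfl⟩ : ∃ j, emb2 n m j = v := ⟨⟨v.1 - (n + 1), by omega⟩, Fin.ext (by simp; omega)⟩
    simp only [emb2_val] at hv' hgt
    exact emb2_mem_concatSet (mem_filter.2 ⟨mem_interiorVerts.2 (by omega), hv⟩)

end Concat

theorem piFun_concat_general (n m : ℕ)
    (G₁ : SimpleGraph (Fin (n + 2))) (G₂ : SimpleGraph (Fin (m + 2))) :
    piFun (n + m + 1) (concatG G₁ G₂) = piFun n G₁ * piFun m G₂ := by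
  rw [piFun, ← sum_filter_of_ne (p := (cutVertex n m ∈ ·)) fun I _ hne => by_contra fun hcut =>
    hne (by rw [if_neg (not_connIn_concatG (mt mem_coe.1 hcut)), mul_zero])]
  rw [piFun, piFun, sum_mul_sum, ← sum_product']
  refine (sum_nbij' (fun p => concatSet p.1 p.2)
    (fun I => ((interiorVerts n).filter (emb1 n m · ∈ I),
      (interiorVerts m).filter (emb2 n m · ∈ I))) ?_ ?_ ?_ ?_ ?_).symm
  · simp only [mem_product, mem_powerset, mem_filter]
    rintro ⟨I₁, I₂⟩ ⟨h₁, h₂⟩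
    exact ⟨concatSet_subset_interiorVerts h₁ h₂, cutVertex_mem_concatSet⟩
  · intro I _
    simp [filter_subset]
  · rintro ⟨I₁, I₂⟩ h
    simp only [mem_product, mem_powerset] at h
    exact Prod.ext (filter_emb1_mem_concatSet h.1) (filter_emb2_mem_concatSet h.2)
  · intro I hI
    simp only [mem_filter, mem_powerset] at hI
    exact concatSet_filter_emb_mem hI.1 hI.2
  · rintro ⟨I₁, I₂⟩ h
    simp only [mem_product, mem_powerset] at h
    have h₁ := (card_le_card h.1).trans (card_interiorVerts n).le
    have h₂ := (card_le_card h.2).trans (card_interiorVerts m).le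
    rw [card_concatSet h.1 h.2, connIn_concatG_concatSet_iff,
      show n + m + 1 - (#I₁ + #I₂ + 1) = (n - #I₁) + (m - #I₂) by omega, pow_add]
    split_ifs <;> simp_all

/-- `π_{n+m+1}(G₁ ⊙ G₂) = π_n(G₁) ⋅ π_m(G₂)` for connected graphs `G₁ ∈ 𝒢_n`, `G₂ ∈ 𝒢_m`. -/
theorem piFun_concat (n m : ℕ)
    (G₁ : SimpleGraph (Fin (n + 2))) (G₂ : SimpleGraph (Fin (m + 2)))
    (hG₁ : G₁.Connected) (hG₂ : G₂.Connected) :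
    piFun (n + m + 1) (concatG G₁ G₂) = piFun n G₁ * piFun m G₂ :=
  piFun_concat_general n m G₁ G₂
end
end

section
/- For every n ∈ ℕ₀ and every x ∈ ℝ^d, the two graph-sum representations of the coefficient p_n coincide: Σ_{G ∈ 𝒢_n} π_n(G) I_n(G,x) = Σ_{H ∈ 𝒢_n} κ_n(H) J_n(H,x). -/
open MeasureTheory Finset
open scoped ENNReal Classical

noncomputable section

/-- The point configuration `x₀ = 0`, `x₁,…,x_n = xs`, `x_{n+1} = x`. -/
def pts {d n : ℕ} (x : EuclideanSpace ℝ (Fin d)) (xs : Fin n → EuclideanSpace ℝ (Fin d)) :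
    Fin (n + 2) → EuclideanSpace ℝ (Fin d) :=
  Fin.cons 0 (Fin.snoc xs x)

/-- `∏_{{i,j} ∈ E(G)} φ(y_i - y_j)`, product over ordered pairs `i < j`. -/
def edgeProd {d k : ℕ} (φ : EuclideanSpace ℝ (Fin d) → ℝ)
    (G : SimpleGraph (Fin k)) (y : Fin k → EuclideanSpace ℝ (Fin d)) : ℝ :=
  ∏ p ∈ Finset.univ.filter (fun p : Fin k × Fin k => p.1 < p.2 ∧ G.Adj p.1 p.2),
    φ (y p.1 - y p.2)

/-- `J_n(G,x) = ∫ ∏_{{i,j} ∈ E(G)} φ(x_i - x_j) d(x₁,…,x_n)` with `x₀ = 0`, `x_{n+1} = x`. -/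
def Jfun {d : ℕ} (φ : EuclideanSpace ℝ (Fin d) → ℝ) (n : ℕ)
    (G : SimpleGraph (Fin (n + 2))) (x : EuclideanSpace ℝ (Fin d)) : ℝ :=
  ∫ xs : Fin n → EuclideanSpace ℝ (Fin d), edgeProd φ G (pts x xs)

/-- `I_n(G,x) = ∫ ∏_{{i,j} ∈ E(G)} φ(x_i-x_j) ∏_{{i,j} ∉ E(G)} (1 - φ(x_i-x_j)) d(x₁,…,x_n)`. -/
def Ifun {d : ℕ} (φ : EuclideanSpace ℝ (Fin d) → ℝ) (n : ℕ)
    (G : SimpleGraph (Fin (n + 2))) (x : EuclideanSpace ℝ (Fin d)) : ℝ :=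
  ∫ xs : Fin n → EuclideanSpace ℝ (Fin d),
    edgeProd φ G (pts x xs) *
      ∏ p ∈ Finset.univ.filter
          (fun p : Fin (n + 2) × Fin (n + 2) => p.1 < p.2 ∧ ¬ G.Adj p.1 p.2),
        (1 - φ (pts x xs p.1 - pts x xs p.2))

/-- `p_n(x) = (1/n!) Σ_{H ∈ 𝒢_n} κ_n(H) J_n(H,x)`. -/
def pFun {d : ℕ} (φ : EuclideanSpace ℝ (Fin d) → ℝ) (n : ℕ)
    (x : EuclideanSpace ℝ (Fin d)) : ℝ :=
  (Nat.factorial n : ℝ)⁻¹ *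
    ∑ H ∈ Finset.univ.filter (fun H : SimpleGraph (Fin (n + 2)) => H.Connected),
      (kappaFun n H : ℝ) * Jfun φ n H x

/-!
Multiplying out the factors `1 - φ` in the integrand of `I_n(G,x)` writes it as the alternating sum
`Σ_{H ⊇ G} (-1)^{|E(H)|-|E(G)|}` of the integrands of `J_n(H,x)`. Every such `H` is connected, so
each of these integrands is integrable and the integral splits; exchanging the sums over `G ⊆ H`
then collects exactly the coefficient `κ_n(H)` in front of `J_n(H,x)`.

Integrability: a connected `H` has a breadth-first spanning tree rooted at `0`. As `0 ≤ φ ≤ 1`, the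
integrand of `J_n(H,x)` is bounded by the product over the tree edges, and integrating out the
vertices in order of decreasing distance from `0` (each against one tree edge, by invariance of
Lebesgue measure under translation and reflection) gives `m_φ^n`.
-/

theorem Finset.prod_mul_prod_one_sub {α R : Type*} [CommRing R] [DecidableEq α] {A N : Finset α}
    (h : Disjoint A N) (f : α → R) :
    (∏ a ∈ A, f a) * ∏ a ∈ N, (1 - f a) = ∑ t ∈ N.powerset, (-1) ^ t.card * ∏ a ∈ A ∪ t, f a := by
  rw [prod_sub, mul_sum]
  refine sum_congr rfl fun t ht => ?_
  rw [prod_union (h.mono_right (mem_powerset.mp ht)), prod_const_one]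
  ring

section TriangularFubini

variable {ι α : Type*} [DecidableEq ι] [LinearOrder α] {X : ι → Type*}
  [∀ i, MeasurableSpace (X i)] {μ : ∀ i, Measure (X i)}

theorem lmarginal_const_mul (s : Finset ι) (c : ℝ≥0∞) {f : (∀ i, X i) → ℝ≥0∞}
    (hf : Measurable f) : ∫⋯∫⁻_s, (fun x => c * f x) ∂μ = fun x => c * (∫⋯∫⁻_s, f ∂μ) x := by
  funext x
  exact lintegral_const_mul _ (hf.comp measurable_updateFinset)

variable [∀ i, SigmaFinite (μ i)] {F : ι → (∀ i, X i) → ℝ≥0∞} {m : ι → ℝ≥0∞}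

theorem lmarginal_prod_eq_prod_of_rank (hF : ∀ i, Measurable (F i)) (rank : ι → α)
    (hrank : ∀ i j, i ≠ j → rank i ≤ rank j → ∀ x y, F i (Function.update x j y) = F i x)
    (hm : ∀ i x, ∫⁻ y, F i (Function.update x i y) ∂μ i = m i) (s : Finset ι) :
    ∫⋯∫⁻_s, (fun x => ∏ i ∈ s, F i x) ∂μ = fun _ => ∏ i ∈ s, m i := by
  induction s using Finset.induction_on_max_value rank with
  | empty => simp
  | insert a s ha hmax ih =>
    have hprod : ∀ t : Finset ι, Measurable fun x => ∏ i ∈ t, F i x :=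
      fun t => Finset.measurable_prod _ fun i _ => hF i
    have hinner : (fun x => ∫⁻ y, ∏ i ∈ insert a s, F i (Function.update x a y) ∂μ a) =
        fun x => m a * ∏ i ∈ s, F i x := by
      funext x
      have hfix : ∀ y, ∏ i ∈ s, F i (Function.update x a y) = ∏ i ∈ s, F i x :=
        fun y => prod_congr rfl fun i hi => hrank i a (ne_of_mem_of_not_mem hi ha) (hmax i hi) x y
      simp_rw [prod_insert ha, hfix]
      rw [lintegral_mul_const _ (by exact (hF a).comp (measurable_update x)), hm, mul_comm]
    rw [lmarginal_insert' _ (hprod _) ha, hinner, lmarginal_const_mul _ _ (hprod s), ih]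
    simp [prod_insert ha]

theorem lintegral_prod_eq_prod_of_rank [Fintype ι] [∀ i, Nonempty (X i)]
    (hF : ∀ i, Measurable (F i)) (rank : ι → α)
    (hrank : ∀ i j, i ≠ j → rank i ≤ rank j → ∀ x y, F i (Function.update x j y) = F i x)
    (hm : ∀ i x, ∫⁻ y, F i (Function.update x i y) ∂μ i = m i) :
    ∫⁻ x, ∏ i, F i x ∂Measure.pi μ = ∏ i, m i := by
  simpa using congrFun (lmarginal_prod_eq_prod_of_rank hF rank hrank hm univ)
    fun i => Classical.arbitrary (X i)

end TriangularFubini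

namespace SimpleGraph

variable {k : ℕ}

def edgePairs (G : SimpleGraph (Fin k)) : Finset (Fin k × Fin k) :=
  univ.filter fun p => p.1 < p.2 ∧ G.Adj p.1 p.2

@[simp]
theorem mem_edgePairs {G : SimpleGraph (Fin k)} {p : Fin k × Fin k} :
    p ∈ G.edgePairs ↔ p.1 < p.2 ∧ G.Adj p.1 p.2 := by
  simp [edgePairs]

theorem edgePairs_subset_edgePairs {G H : SimpleGraph (Fin k)} :
    G.edgePairs ⊆ H.edgePairs ↔ G ≤ H := by
  refine ⟨fun h a b hab => ?_, fun h p hp => ?_⟩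
  · rcases lt_trichotomy a b with hlt | rfl | hgt
    · exact (mem_edgePairs.mp (h (mem_edgePairs (p := (a, b)) |>.mpr ⟨hlt, hab⟩))).2
    · exact absurd hab (G.loopless.irrefl _)
    · exact (mem_edgePairs.mp (h (mem_edgePairs (p := (b, a)) |>.mpr ⟨hgt, hab.symm⟩))).2.symm
  · exact mem_edgePairs.mpr ⟨(mem_edgePairs.mp hp).1, h (mem_edgePairs.mp hp).2⟩

theorem edgePairs_injective : Function.Injective (edgePairs (k := k)) := fun _ _ h =>
  le_antisymm (edgePairs_subset_edgePairs.mp h.le) (edgePairs_subset_edgePairs.mp h.ge)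

theorem edgePairs_fromRel {s : Finset (Fin k × Fin k)} (hs : ∀ p ∈ s, p.1 < p.2) :
    (fromRel fun a b => (a, b) ∈ s).edgePairs = s := by
  ext ⟨a, b⟩
  simp only [mem_edgePairs, fromRel_adj]
  constructor
  · rintro ⟨hlt, -, h | h⟩
    · exact h
    · exact absurd (hs _ h) (lt_asymm hlt)
  · exact fun h => ⟨hs _ h, (hs _ h).ne, Or.inl h⟩

theorem Connected.exists_adj_dist_lt {V : Type*} {G : SimpleGraph V}
    (hG : G.Connected) (u : V) {w : V} (hw : w ≠ u) : ∃ v, G.Adj v w ∧ G.dist u v < G.dist u w := by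
  obtain ⟨p, hp⟩ := hG.exists_walk_length_eq_dist w u
  obtain ⟨v, hadj, q, rfl⟩ := Walk.exists_eq_cons_of_ne hw p
  refine ⟨v, hadj.symm, ?_⟩
  have hq : G.dist v u ≤ q.length := dist_le q
  rw [dist_comm (u := u), dist_comm (u := u), ← hp, Walk.length_cons]
  omega

theorem Connected.exists_parentEdges {n : ℕ} {H : SimpleGraph (Fin (n + 2))}
    (hH : H.Connected) :
    ∃ e : Fin n → Fin (n + 2) × Fin (n + 2), Function.Injective e ∧ (∀ i, e i ∈ H.edgePairs) ∧
      ∀ i, ∃ u, H.dist 0 u < H.dist 0 i.castSucc.succ ∧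
        (e i = (u, i.castSucc.succ) ∨ e i = (i.castSucc.succ, u)) := by
  choose par hadj hlt using fun i : Fin n => hH.exists_adj_dist_lt 0 i.castSucc.succ_ne_zero
  refine ⟨fun i => if par i < i.castSucc.succ then (par i, i.castSucc.succ)
    else (i.castSucc.succ, par i), fun i j hij => ?_, fun i => ?_, fun i => ⟨par i, hlt i, ?_⟩⟩
  · -- two distinct tree edges could only coincide crosswise, each child being its parent's parent
    by_contra hne
    have hv : i.castSucc.succ ≠ j.castSucc.succ := by simpa using hne
    have hcross : par i = j.castSucc.succ ∧ i.castSucc.succ = par j := by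
      dsimp only at hij
      split_ifs at hij <;> simp only [Prod.mk.injEq] at hij <;> tauto
    have hi := hlt i
    have hj := hlt j
    rw [hcross.1] at hi
    rw [← hcross.2] at hj
    omega
  · dsimp only
    split_ifs with h
    · exact mem_edgePairs.mpr ⟨h, hadj i⟩
    · exact mem_edgePairs.mpr ⟨lt_of_le_of_ne (not_lt.mp h) (hadj i).ne.symm, (hadj i).symm⟩
  · dsimp only
    split_ifs
    · exact Or.inl rfl
    · exact Or.inr rfl

end SimpleGraph

section EdgeProducts

open SimpleGraph

variable {d k : ℕ}

theorem edgeProd_eq_prod_edgePairs (φ : EuclideanSpace ℝ (Fin d) → ℝ)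
    (G : SimpleGraph (Fin k)) (y : Fin k → EuclideanSpace ℝ (Fin d)) :
    edgeProd φ G y = ∏ p ∈ G.edgePairs, φ (y p.1 - y p.2) := rfl

theorem edgeCount_eq_card_edgePairs (G : SimpleGraph (Fin k)) :
    edgeCount G = #G.edgePairs := rfl

theorem edgeProd_mul_prod_one_sub_eq_sum (φ : EuclideanSpace ℝ (Fin d) → ℝ)
    (G : SimpleGraph (Fin k)) (y : Fin k → EuclideanSpace ℝ (Fin d)) :
    edgeProd φ G y * ∏ p ∈ univ.filter (fun p : Fin k × Fin k => p.1 < p.2 ∧ ¬ G.Adj p.1 p.2),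
        (1 - φ (y p.1 - y p.2)) =
      ∑ H ∈ univ.filter (G ≤ ·), (-1) ^ (edgeCount H - edgeCount G) * edgeProd φ H y := by
  set N := univ.filter fun p : Fin k × Fin k => p.1 < p.2 ∧ ¬ G.Adj p.1 p.2
  have hN : ∀ {t}, t ∈ N.powerset → ∀ p ∈ t, p.1 < p.2 ∧ ¬ G.Adj p.1 p.2 := fun ht p hp => by
    simpa [N] using mem_powerset.mp ht hp
  have hdisj : ∀ {t}, t ∈ N.powerset → Disjoint G.edgePairs t := fun ht =>
    Finset.disjoint_left.mpr fun p hpG hpt => (hN ht p hpt).2 (mem_edgePairs.mp hpG).2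
  have hpairs : ∀ {t}, t ∈ N.powerset →
      (fromRel fun a b => (a, b) ∈ G.edgePairs ∪ t).edgePairs = G.edgePairs ∪ t := fun ht =>
    edgePairs_fromRel fun p hp =>
      (mem_union.mp hp).elim (fun h => (mem_edgePairs.mp h).1) fun h => (hN ht p h).1
  rw [edgeProd_eq_prod_edgePairs, prod_mul_prod_one_sub (hdisj (mem_powerset_self N))]
  refine sum_nbij' (fun t => fromRel fun a b => (a, b) ∈ G.edgePairs ∪ t)
    (fun H => H.edgePairs \ G.edgePairs) (fun t ht => ?_) (fun H hH => ?_) (fun t ht => ?_)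
    (fun H hH => ?_) (fun t ht => ?_)
  · refine mem_filter.mpr ⟨mem_univ _, edgePairs_subset_edgePairs.mp ?_⟩
    exact (hpairs ht).symm ▸ subset_union_left
  · refine mem_powerset.mpr fun p hp => ?_
    obtain ⟨hpH, hpG⟩ := mem_sdiff.mp hp
    have hp' := mem_edgePairs.mp hpH
    simpa [N, hp'.1] using fun hadj => hpG (mem_edgePairs.mpr ⟨hp'.1, hadj⟩)
  · simp only [hpairs ht, union_sdiff_cancel_left (hdisj ht)]
  · apply edgePairs_injective
    have hGH : G.edgePairs ⊆ H.edgePairs := edgePairs_subset_edgePairs.mpr (mem_filter.mp hH).2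
    rw [union_sdiff_of_subset hGH, edgePairs_fromRel fun p hp => (mem_edgePairs.mp hp).1]
  · rw [edgeCount_eq_card_edgePairs, edgeCount_eq_card_edgePairs, edgeProd_eq_prod_edgePairs,
      hpairs ht, card_union_of_disjoint (hdisj ht), Nat.add_sub_cancel_left]

theorem edgeProd_le_prod {φ : EuclideanSpace ℝ (Fin d) → ℝ} (hφ0 : ∀ z, 0 ≤ φ z)
    (hφ1 : ∀ z, φ z ≤ 1) {G : SimpleGraph (Fin k)} {ι : Type*} [Fintype ι]
    {e : ι → Fin k × Fin k} (he : Function.Injective e) (hmem : ∀ i, e i ∈ G.edgePairs)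
    (y : Fin k → EuclideanSpace ℝ (Fin d)) :
    edgeProd φ G y ≤ ∏ i, φ (y (e i).1 - y (e i).2) := by
  rw [edgeProd_eq_prod_edgePairs]
  refine (prod_le_prod_of_subset_of_le_one (s := univ.image e)
    (image_subset_iff.mpr fun i _ => hmem i) (fun _ _ => hφ0 _) fun _ _ _ => hφ1 _).trans_eq ?_
  exact prod_image fun i _ j _ h => he h

end EdgeProducts

section Configurations

variable {d n : ℕ} {φ : EuclideanSpace ℝ (Fin d) → ℝ}

theorem pts_update (x : EuclideanSpace ℝ (Fin d)) (xs : Fin n → EuclideanSpace ℝ (Fin d))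
    (i : Fin n) (z : EuclideanSpace ℝ (Fin d)) :
    pts x (Function.update xs i z) = Function.update (pts x xs) i.castSucc.succ z := by
  rw [pts, Fin.snoc_update, Fin.cons_update, pts]

theorem continuous_pts (x : EuclideanSpace ℝ (Fin d)) :
    Continuous (pts x : (Fin n → EuclideanSpace ℝ (Fin d)) → Fin (n + 2) → _) :=
  continuous_const.finCons (continuous_id.finSnoc (A := fun _ => EuclideanSpace ℝ (Fin d))
    continuous_const)

theorem measurable_comp_pts_sub {β : Type*} [MeasurableSpace β]
    {f : EuclideanSpace ℝ (Fin d) → β} (hf : Measurable f)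
    (x : EuclideanSpace ℝ (Fin d)) (a b : Fin (n + 2)) :
    Measurable fun xs => f (pts x xs a - pts x xs b) :=
  hf.comp (((continuous_apply a).comp (continuous_pts x)).sub
    ((continuous_apply b).comp (continuous_pts x))).measurable

theorem lintegral_prod_pts_of_rank {f : EuclideanSpace ℝ (Fin d) → ℝ≥0∞} (hf : Measurable f)
    (rank : Fin (n + 2) → ℕ) {e : Fin n → Fin (n + 2) × Fin (n + 2)}
    (he : ∀ i, ∃ u, rank u < rank i.castSucc.succ ∧
      (e i = (u, i.castSucc.succ) ∨ e i = (i.castSucc.succ, u)))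
    (x : EuclideanSpace ℝ (Fin d)) :
    ∫⁻ xs : Fin n → EuclideanSpace ℝ (Fin d), ∏ i, f (pts x xs (e i).1 - pts x xs (e i).2) =
      (∫⁻ z, f z) ^ n := by
  choose u hu he using he
  have hne : ∀ i j : Fin n, rank i.castSucc.succ ≤ rank j.castSucc.succ → u i ≠ j.castSucc.succ :=
    fun i j hij h => (hu i).not_ge (h ▸ hij)
  have hfix : ∀ i j, i ≠ j → rank i.castSucc.succ ≤ rank j.castSucc.succ → ∀ xs z,
      f (pts x (Function.update xs j z) (e i).1 - pts x (Function.update xs j z) (e i).2) =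
        f (pts x xs (e i).1 - pts x xs (e i).2) := by
    intro i j hij hrank xs z
    have hij' : i.castSucc.succ ≠ j.castSucc.succ := by simpa using hij
    rcases he i with h | h <;>
      simp only [h, pts_update, Function.update_of_ne (hne i j hrank), Function.update_of_ne hij']
  have hslice : ∀ i xs, ∫⁻ z, f (pts x (Function.update xs i z) (e i).1 -
      pts x (Function.update xs i z) (e i).2) = ∫⁻ z, f z := by
    intro i xs
    have hui : u i ≠ i.castSucc.succ := hne i i le_rfl
    rcases he i with h | h <;>
      simp only [h, pts_update, Function.update_self, Function.update_of_ne hui]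
    · exact lintegral_sub_left_eq_self f _
    · exact lintegral_sub_right_eq_self f _
  rw [volume_pi, lintegral_prod_eq_prod_of_rank (fun i => measurable_comp_pts_sub hf x _ _) _
    hfix hslice, prod_const, card_univ, Fintype.card_fin]

theorem integrable_edgeProd_pts (hφ : Measurable φ) (hφ0 : ∀ z, 0 ≤ φ z) (hφ1 : ∀ z, φ z ≤ 1)
    (hint : Integrable φ) {H : SimpleGraph (Fin (n + 2))} (hH : H.Connected)
    (x : EuclideanSpace ℝ (Fin d)) :
    Integrable fun xs : Fin n → EuclideanSpace ℝ (Fin d) => edgeProd φ H (pts x xs) := by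
  obtain ⟨e, he_inj, he_mem, he_par⟩ := hH.exists_parentEdges
  have hmeas : Measurable fun xs : Fin n → EuclideanSpace ℝ (Fin d) => edgeProd φ H (pts x xs) :=
    Finset.measurable_prod _ fun p _ => measurable_comp_pts_sub hφ x p.1 p.2
  have hnonneg : ∀ xs, 0 ≤ edgeProd φ H (pts x xs) := fun xs => prod_nonneg fun _ _ => hφ0 _
  refine ⟨hmeas.aestronglyMeasurable, ?_⟩
  rw [hasFiniteIntegral_iff_ofReal (ae_of_all _ hnonneg)]
  calc ∫⁻ xs, ENNReal.ofReal (edgeProd φ H (pts x xs))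
      ≤ ∫⁻ xs, ∏ i, ENNReal.ofReal (φ (pts x xs (e i).1 - pts x xs (e i).2)) :=
        lintegral_mono fun xs => (ENNReal.ofReal_le_ofReal
          (edgeProd_le_prod hφ0 hφ1 he_inj he_mem _)).trans_eq
          (ENNReal.ofReal_prod_of_nonneg fun _ _ => hφ0 _)
    _ = (∫⁻ z, ENNReal.ofReal (φ z)) ^ n :=
        lintegral_prod_pts_of_rank (ENNReal.measurable_ofReal.comp hφ) (H.dist 0) he_par x
    _ < ⊤ := ENNReal.pow_lt_top hint.lintegral_lt_top

theorem Ifun_eq_sum_Jfun (hφ : Measurable φ) (hφ0 : ∀ z, 0 ≤ φ z) (hφ1 : ∀ z, φ z ≤ 1)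
    (hint : Integrable φ) {G : SimpleGraph (Fin (n + 2))} (hG : G.Connected)
    (x : EuclideanSpace ℝ (Fin d)) :
    Ifun φ n G x =
      ∑ H ∈ univ.filter (G ≤ ·), (-1) ^ (edgeCount H - edgeCount G) * Jfun φ n H x := by
  simp_rw [Ifun, edgeProd_mul_prod_one_sub_eq_sum]
  rw [integral_finsetSum _ fun H hH =>
    (integrable_edgeProd_pts hφ hφ0 hφ1 hint (hG.mono (mem_filter.mp hH).2) x).const_mul _]
  simp_rw [integral_const_mul, Jfun]

end Configurations

theorem pi_I_eq_kappa_J_general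
    {d : ℕ} (φ : EuclideanSpace ℝ (Fin d) → ℝ)
    (hφmeas : Measurable φ) (hφrange : ∀ x, φ x ∈ Set.Icc (0 : ℝ) 1)
    (hφint : Integrable φ)
    (n : ℕ) (x : EuclideanSpace ℝ (Fin d)) :
    (∑ G ∈ Finset.univ.filter (fun G : SimpleGraph (Fin (n + 2)) => G.Connected),
        (piFun n G : ℝ) * Ifun φ n G x) =
      ∑ H ∈ Finset.univ.filter (fun H : SimpleGraph (Fin (n + 2)) => H.Connected),
        (kappaFun n H : ℝ) * Jfun φ n H x := by
  have hI := fun (G : SimpleGraph (Fin (n + 2))) (hG : G.Connected) =>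
    Ifun_eq_sum_Jfun hφmeas (fun z => (hφrange z).1) (fun z => (hφrange z).2) hφint hG x
  calc _ = ∑ G ∈ univ.filter (·.Connected), ∑ H ∈ univ.filter (G ≤ ·),
        (piFun n G : ℝ) * ((-1) ^ (edgeCount H - edgeCount G) * Jfun φ n H x) :=
        sum_congr rfl fun G hG => by rw [hI G (mem_filter.mp hG).2, mul_sum]
    _ = ∑ H ∈ univ.filter (·.Connected), ∑ G ∈ univ.filter (fun G => G.Connected ∧ G ≤ H),
        (piFun n G : ℝ) * ((-1) ^ (edgeCount H - edgeCount G) * Jfun φ n H x) :=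
        sum_comm' fun G H => by
          simp only [mem_filter, mem_univ, true_and]
          exact ⟨fun h => ⟨h, h.1.mono h.2⟩, fun h => h.1⟩
    _ = _ := sum_congr rfl fun H _ => by
        rw [kappaFun, Int.cast_sum, sum_mul]
        refine sum_congr rfl fun G _ => ?_
        push_cast
        ring

/-- The two graph-sum representations of the coefficient `p_n` coincide:
`Σ_{G ∈ 𝒢_n} π_n(G) I_n(G,x) = Σ_{H ∈ 𝒢_n} κ_n(H) J_n(H,x)`. -/
theorem pi_I_eq_kappa_J
    {d : ℕ} (hd : 1 ≤ d) (φ : EuclideanSpace ℝ (Fin d) → ℝ)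
    (hφmeas : Measurable φ) (hφrange : ∀ x, φ x ∈ Set.Icc (0 : ℝ) 1)
    (hφsymm : ∀ x, φ (-x) = φ x)
    (hφint : Integrable φ) (hφpos : 0 < ∫ x, φ x)
    (n : ℕ) (x : EuclideanSpace ℝ (Fin d)) :
    (∑ G ∈ Finset.univ.filter (fun G : SimpleGraph (Fin (n + 2)) => G.Connected),
        (piFun n G : ℝ) * Ifun φ n G x) =
      ∑ H ∈ Finset.univ.filter (fun H : SimpleGraph (Fin (n + 2)) => H.Connected),
        (kappaFun n H : ℝ) * Jfun φ n H x :=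
  pi_I_eq_kappa_J_general φ hφmeas hφrange hφint n x

end
end
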